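/- arXiv:q-bio/0609001 — 6 statements merged into one kernel-verified Lean document; each statement's English description precedes it below -/
import Mathlib

section
/- Let Y ⊆ R^{m×n} be the polytope defined by: for each i, ∑_{j=1}^n y_{ij} = 1; for each i = 1,...,m-1 and j = 1,...,n-1, ∑_{l=1}^j y_{il} - ∑_{l=1}^j y_{i+1,l} ≥ 0; and y_{ij} ≥ 0 for all i,j. Then every vertex (extreme point) of Y has all coordinates in {0,1}. -/
open Finset

/-- The threading polytope `Y ⊆ ℝ^{m×n}`: each row sums to 1, prefix sums of consecutive
rows are ordered, and all entries are nonnegative. -/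
def threadingPolytope (m n : ℕ) : Set (Fin m → Fin n → ℝ) :=
  {y | (∀ i, ∑ j, y i j = 1) ∧
       (∀ (i : Fin m) (hi : (i : ℕ) + 1 < m) (j : Fin n), (j : ℕ) + 1 < n →
         ∑ l ∈ Finset.univ.filter (· ≤ j), y ⟨(i : ℕ) + 1, hi⟩ l ≤
           ∑ l ∈ Finset.univ.filter (· ≤ j), y i l) ∧
       (∀ i j, 0 ≤ y i j)}

/-!
Write `S i k = ∑_{l < k} y i l` for the prefix sums of row `i`. If some `S i k` of a point
`y ∈ Y` takes a value `t ∉ {0, 1}`, shift every prefix sum equal to `t`, in all rows at once,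
by a common small amount `c`. The prefix sums `S i 0 = 0` and `S i n = 1` never move, a tight
ordering constraint has both sides shifted together, and an entry `y i j = S i (j+1) - S i j`
changes only if it is positive; so `y` is the midpoint of two points of `Y` and is not extreme.
Hence the prefix sums of a vertex are `0` or `1`, and so are their increments `y i j`.
-/

open Filter Topology

section ExtremePoints

variable {E : Type*} [AddCommGroup E] [Module ℝ E]

theorem eq_zero_of_eventually_add_smul_mem_of_mem_extremePoints {A : Set E} {x v : E}
    (hx : x ∈ A.extremePoints ℝ) (hv : ∀ᶠ c in 𝓝 (0 : ℝ), x + c • v ∈ A) : v = 0 := by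
  have hv_neg : ∀ᶠ c in 𝓝 (0 : ℝ), x + (-c) • v ∈ A :=
    (continuous_neg.tendsto' 0 0 neg_zero).eventually hv
  obtain ⟨ε, hε, hplus, hminus⟩ := (hv.and hv_neg).exists_gt
  have hmid : x ∈ openSegment ℝ (x + ε • v) (x + (-ε) • v) :=
    ⟨1 / 2, 1 / 2, by norm_num, by norm_num, by norm_num, by module⟩
  have hεv : ε • v = 0 := by simpa using hx.2 hplus hminus hmid
  exact (smul_eq_zero.1 hεv).resolve_left (ne_of_gt hε)

end ExtremePoints

theorem eventually_add_mul_le_add_mul {a b u v : ℝ} (hab : a ≤ b) (huv : a = b → u = v) :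
    ∀ᶠ c in 𝓝 (0 : ℝ), a + c * u ≤ b + c * v := by
  rcases hab.lt_or_eq with hlt | rfl
  · have hcont : ∀ e w : ℝ, Continuous fun c : ℝ => e + c * w := fun e w => by fun_prop
    refine ((hcont a u).continuousAt.eventually_lt (hcont b v).continuousAt ?_).mono
      fun _ h => h.le
    simpa using hlt
  · exact Eventually.of_forall fun c => by rw [huv rfl]

section PrefixSum

variable {n : ℕ}

def prefixSum (v : Fin n → ℝ) (k : ℕ) : ℝ :=
  ∑ l : Fin n with l.val < k, v l

@[simp]
theorem prefixSum_zero (v : Fin n → ℝ) : prefixSum v 0 = 0 := by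
  simp [prefixSum]

theorem prefixSum_succ (v : Fin n → ℝ) {k : ℕ} (hk : k < n) :
    prefixSum v (k + 1) = prefixSum v k + v ⟨k, hk⟩ := by
  have hfilter : univ.filter (fun l : Fin n => l.val < k + 1) =
      insert ⟨k, hk⟩ (univ.filter fun l : Fin n => l.val < k) := by
    ext l
    simp only [mem_filter, mem_univ, true_and, mem_insert, Fin.ext_iff]
    omega
  rw [prefixSum, hfilter, sum_insert (by simp), add_comm]
  rfl

theorem prefixSum_self (v : Fin n → ℝ) : prefixSum v n = ∑ l, v l := by
  simp [prefixSum]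

theorem sum_filter_le_eq_prefixSum (v : Fin n → ℝ) (j : Fin n) :
    ∑ l ∈ univ.filter (· ≤ j), v l = prefixSum v (j + 1) := by
  simp only [prefixSum, Nat.lt_succ_iff, Fin.le_def]

theorem prefixSum_add_mul (v w : Fin n → ℝ) (c : ℝ) (k : ℕ) :
    prefixSum (fun l => v l + c * w l) k = prefixSum v k + c * prefixSum w k := by
  simp only [prefixSum, sum_add_distrib, mul_sum]

theorem prefixSum_sub_telescope (f : ℕ → ℝ) {k : ℕ} (hk : k ≤ n) :
    prefixSum (fun j : Fin n => f (j + 1) - f j) k = f k - f 0 := by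
  induction k with
  | zero => simp
  | succ k ih =>
    rw [prefixSum_succ _ hk, ih (Nat.le_of_succ_le hk)]
    ring

end PrefixSum

section LevelDirection

variable {m n : ℕ}

noncomputable def levelDirection (y : Fin m → Fin n → ℝ) (t : ℝ) (i : Fin m) (j : Fin n) : ℝ :=
  (if prefixSum (y i) (j + 1) = t then 1 else 0) -
    (if prefixSum (y i) j = t then 1 else 0)

theorem prefixSum_levelDirection (y : Fin m → Fin n → ℝ) {t : ℝ} (ht : t ≠ 0) (i : Fin m)
    {k : ℕ} (hk : k ≤ n) :
    prefixSum (levelDirection y t i) k = if prefixSum (y i) k = t then 1 else 0 :=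
  (prefixSum_sub_telescope (fun k => if prefixSum (y i) k = t then 1 else 0) hk).trans
    (by rw [prefixSum_zero, if_neg ht.symm, sub_zero])

theorem eventually_add_smul_levelDirection_mem {y : Fin m → Fin n → ℝ}
    (hy : y ∈ threadingPolytope m n) {t : ℝ} (ht0 : t ≠ 0) (ht1 : t ≠ 1) :
    ∀ᶠ c in 𝓝 (0 : ℝ), y + c • levelDirection y t ∈ threadingPolytope m n := by
  obtain ⟨hrow, hord, hnonneg⟩ := hy
  have hrow' : ∀ (c : ℝ) i, ∑ j, (y + c • levelDirection y t) i j = 1 := fun c i => by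
    simp only [Pi.add_apply, Pi.smul_apply, smul_eq_mul]
    rw [← prefixSum_self, prefixSum_add_mul, prefixSum_self,
      hrow, prefixSum_levelDirection y ht0 i le_rfl, prefixSum_self, hrow, if_neg ht1.symm,
      mul_zero, add_zero]
  have hord' : ∀ (i : Fin m) (hi : (i : ℕ) + 1 < m) (j : Fin n), (j : ℕ) + 1 < n →
      ∀ᶠ c in 𝓝 (0 : ℝ),
        ∑ l ∈ univ.filter (· ≤ j), (y + c • levelDirection y t) ⟨(i : ℕ) + 1, hi⟩ l ≤
          ∑ l ∈ univ.filter (· ≤ j), (y + c • levelDirection y t) i l := fun i hi j hj => by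
    have hij := hord i hi j hj
    simp only [sum_filter_le_eq_prefixSum, Pi.add_apply, Pi.smul_apply, smul_eq_mul,
      prefixSum_add_mul] at hij ⊢
    rw [prefixSum_levelDirection y ht0 _ hj.le, prefixSum_levelDirection y ht0 _ hj.le]
    exact eventually_add_mul_le_add_mul hij fun h => by rw [h]
  have hnonneg' : ∀ i j, ∀ᶠ c in 𝓝 (0 : ℝ), 0 ≤ (y + c • levelDirection y t) i j :=
      fun i j => by
    have hstep := prefixSum_succ (y i) j.isLt
    simpa using eventually_add_mul_le_add_mul (u := 0) (hnonneg i j) fun h => by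
      simp [levelDirection, hstep, ← h]
  filter_upwards [eventually_all.2 fun i => eventually_all.2 fun hi => eventually_all.2
    fun j => eventually_imp_distrib_left.2 (hord' i hi j),
    eventually_all.2 fun i => eventually_all.2 (hnonneg' i)] with c hordc hnonnegc
  exact ⟨hrow' c, hordc, hnonnegc⟩

end LevelDirection

theorem prefixSum_eq_zero_or_eq_one_of_mem_extremePoints {m n : ℕ} {y : Fin m → Fin n → ℝ}
    (hy : y ∈ (threadingPolytope m n).extremePoints ℝ) (i : Fin m) {k : ℕ} (hk : k ≤ n) :
    prefixSum (y i) k = 0 ∨ prefixSum (y i) k = 1 := by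
  by_contra! ⟨ht0, ht1⟩
  have hd := eq_zero_of_eventually_add_smul_mem_of_mem_extremePoints hy
    (eventually_add_smul_levelDirection_mem hy.1 ht0 ht1)
  have hk' := prefixSum_levelDirection y ht0 i hk
  rw [hd, if_pos rfl] at hk'
  simp [prefixSum] at hk'

/-- Every vertex (extreme point) of the threading polytope `Y` has all coordinates
in `{0,1}`. -/
theorem threadingPolytope_extremePoints_zero_one (m n : ℕ)
    (y : Fin m → Fin n → ℝ)
    (hy : y ∈ Set.extremePoints ℝ (threadingPolytope m n)) :
    ∀ i j, y i j = 0 ∨ y i j = 1 := by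
  intro i j
  have hstep := prefixSum_succ (y i) j.isLt
  have hnonneg := hy.1.2.2 i j
  rcases prefixSum_eq_zero_or_eq_one_of_mem_extremePoints hy i j.isLt.le with h | h <;>
  rcases prefixSum_eq_zero_or_eq_one_of_mem_extremePoints hy i j.isLt with h' | h' <;>
  first
  | exact Or.inl (by linarith)
  | exact Or.inr (by linarith)
end

section
/- The constraint matrix A of the system {∑_{j=1}^n y_{ij} = 1 for i=1,...,m; ∑_{l=1}^j (y_{il} - y_{i+1,l}) ≥ 0 for i=1,...,m-1, j=1,...,n-1} is totally unimodular: every square submatrix of A has determinant in {-1, 0, 1}. -/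
/-- The constraint matrix of the threading polytope: rows indexed by the `m` assignment
constraints `∑_j y_{ij} = 1` and the `(m-1)(n-1)` order constraints
`∑_{l ≤ j} (y_{il} - y_{i+1,l}) ≥ 0`; columns indexed by the variables `y_{ij}`. -/
def threadingConstraintMatrix (m n : ℕ) :
    Matrix (Fin m ⊕ (Fin (m - 1) × Fin (n - 1))) (Fin m × Fin n) ℤ
  | Sum.inl i, (i', _) => if i' = i then 1 else 0
  | Sum.inr (i, j), (i', l) =>
      if (i' : ℕ) = (i : ℕ) ∧ (l : ℕ) ≤ (j : ℕ) then 1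
      else if (i' : ℕ) = (i : ℕ) + 1 ∧ (l : ℕ) ≤ (j : ℕ) then -1
      else 0

private lemma sgnRange_mul {a b : ℤ} (ha : a ∈ Set.range (SignType.cast : SignType → ℤ))
    (hb : b ∈ Set.range (SignType.cast : SignType → ℤ)) :
    a * b ∈ Set.range (SignType.cast : SignType → ℤ) := by
  obtain ⟨s, rfl⟩ := ha
  obtain ⟨t, rfl⟩ := hb
  exact ⟨s * t, by push_cast; ring⟩

private lemma neg_one_pow_mem (p : ℕ) : ((-1 : ℤ) ^ p) ∈ Set.range (SignType.cast : SignType → ℤ) := by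
  rcases Nat.even_or_odd p with h | h
  · rw [h.neg_one_pow]; exact ⟨1, by simp⟩
  · rw [h.neg_one_pow]; exact ⟨-1, by simp⟩

private lemma det_mem_of_rows : ∀ (k : ℕ) (M : Matrix (Fin k) (Fin k) ℤ),
    (∀ r c, M r c = -1 ∨ M r c = 0 ∨ M r c = 1) →
    (∀ r c c', M r c = 1 → M r c' = 1 → c = c') →
    (∀ r c c', M r c = -1 → M r c' = -1 → c = c') →
    M.det ∈ Set.range (SignType.cast : SignType → ℤ) := by
  intro k
  induction k with
  | zero => intro M _ _ _; exact ⟨1, by simp [Matrix.det_fin_zero]⟩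
  | succ k ih =>
    intro M h1 h2 h3
    by_cases hrow : ∃ r c₀, ∀ c, c ≠ c₀ → M r c = 0
    · obtain ⟨r, c₀, h⟩ := hrow
      rw [Matrix.det_succ_row M r]
      rw [Finset.sum_eq_single c₀ (fun c _ hc => by rw [h c hc]; ring) (by simp)]
      apply sgnRange_mul
      apply sgnRange_mul
      · exact neg_one_pow_mem _
      · rcases h1 r c₀ with h' | h' | h' <;> rw [h']
        exacts [⟨-1, by simp⟩, ⟨0, by simp⟩, ⟨1, by simp⟩]
      · apply ih
        · intro r' c'; exact h1 _ _
        · intro r' c c' hc hc'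
          exact Fin.succAbove_right_injective (h2 _ _ _ hc hc')
        · intro r' c c' hc hc'
          exact Fin.succAbove_right_injective (h3 _ _ _ hc hc')
    · push_neg at hrow
      have hsum : ∀ r, ∑ c, M r c = 0 := by
        intro r
        obtain ⟨c₁, -, hc₁⟩ := hrow r 0
        obtain ⟨c₂, hne, hc₂⟩ := hrow r c₁
        -- determine signs
        have hv₁ := h1 r c₁
        have hv₂ := h1 r c₂
        have : ∃ cp cm : Fin (k+1), cp ≠ cm ∧ M r cp = 1 ∧ M r cm = -1 := by
          rcases hv₁ with h' | h' | h' <;> rcases hv₂ with h'' | h'' | h''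
          · exact absurd (h3 r _ _ h'' h') hne
          · exact absurd h'' hc₂
          · exact ⟨c₂, c₁, hne, h'', h'⟩
          · exact absurd h' hc₁
          · exact absurd h' hc₁
          · exact absurd h' hc₁
          · exact ⟨c₁, c₂, hne.symm, h', h''⟩
          · exact absurd h'' hc₂
          · exact absurd (h2 r _ _ h'' h') hne
        obtain ⟨cp, cm, hpm, hp, hm⟩ := this
        have hall : ∀ c, M r c = (if c = cp then 1 else 0) + (if c = cm then (-1 : ℤ) else 0) := by
          intro c
          by_cases hcp : c = cp
          · subst hcp
            rw [if_pos rfl, if_neg hpm, hp]; ring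
          · by_cases hcm : c = cm
            · subst hcm
              rw [if_neg hcp, if_pos rfl, hm]
              ring
            · rw [if_neg hcp, if_neg hcm]
              rcases h1 r c with h' | h' | h'
              · exact absurd (h3 r _ _ h' hm) hcm
              · simpa using h'
              · exact absurd (h2 r _ _ h' hp) hcp
        calc ∑ c, M r c = ∑ c, ((if c = cp then 1 else 0) + (if c = cm then (-1:ℤ) else 0)) := by
              exact Finset.sum_congr rfl fun c _ => hall c
          _ = 0 := by rw [Finset.sum_add_distrib]; simp
      have hdet : M.det = 0 := by
        rw [← Matrix.exists_mulVec_eq_zero_iff]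
        refine ⟨fun _ => 1, ?_, ?_⟩
        · intro h0
          have := congrFun h0 0
          simp at this
        · ext r
          simp [Matrix.mulVec, dotProduct, hsum r]
      rw [hdet]; exact ⟨0, by simp⟩

/-- The constraint matrix of the threading polytope is totally unimodular: every square
submatrix has determinant `-1`, `0` or `1`. -/
theorem threadingConstraintMatrix_isTotallyUnimodular (m n : ℕ) :
    (threadingConstraintMatrix m n).IsTotallyUnimodular := by
  intro k f g hf hg
  classical
  set A := threadingConstraintMatrix m n with hA
  set blk : Fin k → ℕ := fun c => ((g c).1 : ℕ) with hblkdef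
  set lv : Fin k → ℕ := fun c => ((g c).2 : ℕ) with hlvdef
  have hginj : ∀ c c', blk c = blk c' → lv c = lv c' → c = c' := by
    intro c c' h1 h2
    apply hg
    have : (g c).1 = (g c').1 := Fin.ext h1
    have : (g c).2 = (g c').2 := Fin.ext h2
    exact Prod.ext ‹(g c).1 = (g c').1› ‹(g c).2 = (g c').2›
  set P : Fin k → Prop := fun c => ∃ d, blk d = blk c ∧ lv c < lv d with hP
  have hex : ∀ c, ∃ d, (P c → (blk d = blk c ∧ lv c < lv d ∧
      ∀ e, blk e = blk c → lv c < lv e → lv d ≤ lv e)) ∧ (¬ P c → d = c) := by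
    intro c
    by_cases h : P c
    · obtain ⟨d₀, hd₀⟩ := h
      obtain ⟨d, hd, hmin⟩ := Finset.exists_min_image
        (Finset.univ.filter fun d => blk d = blk c ∧ lv c < lv d) lv
        ⟨d₀, by simpa using hd₀⟩
      simp only [Finset.mem_filter, Finset.mem_univ, true_and] at hd
      refine ⟨d, fun _ => ⟨hd.1, hd.2, fun e he1 he2 => ?_⟩, fun h' => absurd ⟨d₀, hd₀⟩ h'⟩
      exact hmin e (by simp [he1, he2])
    · exact ⟨c, fun h' => absurd h' h, fun _ => rfl⟩
  choose nxt hnxt using hex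
  have hblk : ∀ c, P c → blk (nxt c) = blk c := fun c h => ((hnxt c).1 h).1
  have hlt : ∀ c, P c → lv c < lv (nxt c) := fun c h => ((hnxt c).1 h).2.1
  have hmin : ∀ c e, P c → blk e = blk c → lv c < lv e → lv (nxt c) ≤ lv e :=
    fun c e h h1 h2 => ((hnxt c).1 h).2.2 e h1 h2
  set V := (Matrix.of (fun c c' => (if c = c' then (1:ℤ) else 0) -
    (if P c' ∧ c = nxt c' then 1 else 0)) : Matrix (Fin k) (Fin k) ℤ) with hV
  have hVtri : V.BlockTriangular (fun c => OrderDual.toDual (lv c)) := by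
    intro c c' hcc'
    have hlv : lv c < lv c' := hcc'
    show (if c = c' then (1:ℤ) else 0) - (if P c' ∧ c = nxt c' then 1 else 0) = 0
    rw [if_neg (by rintro rfl; omega),
      if_neg (by rintro ⟨hPc, rfl⟩; have := hlt c' hPc; omega)]
    ring
  have hVdet : V.det = 1 := by
    rw [hVtri.det]
    apply Finset.prod_eq_one
    intro a _
    have hb : V.toSquareBlock (fun c => OrderDual.toDual (lv c)) a = 1 := by
      ext ⟨c, hc⟩ ⟨c', hc'⟩
      have hlv : lv c = lv c' := OrderDual.toDual_inj.mp (hc.trans hc'.symm)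
      have hsq : V.toSquareBlock (fun c => OrderDual.toDual (lv c)) a ⟨c, hc⟩ ⟨c', hc'⟩
          = (if c = c' then (1:ℤ) else 0) - (if P c' ∧ c = nxt c' then 1 else 0) := rfl
      rw [hsq]
      by_cases hcc : c = c'
      · subst hcc
        rw [if_pos rfl, if_neg (by rintro ⟨hPc, hrfl⟩; have := hlt c hPc; rw [← hrfl] at this; omega)]
        simp [Matrix.one_apply]
      · rw [if_neg hcc, if_neg (by rintro ⟨hPc, rfl⟩; have := hlt c' hPc; omega)]
        simp [Matrix.one_apply, Subtype.ext_iff, hcc]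
    rw [hb, Matrix.det_one]
  set M := (A.submatrix f g) * V with hMdef
  have hMdet : M.det = (A.submatrix f g).det := by rw [Matrix.det_mul, hVdet, mul_one]
  have hM : ∀ r c', M r c' = A (f r) (g c') - (if P c' then A (f r) (g (nxt c')) else 0) := by
    intro r c'
    simp only [hMdef, Matrix.mul_apply, Matrix.submatrix_apply, hV, Matrix.of_apply]
    simp only [mul_sub, mul_ite, mul_one, mul_zero, Finset.sum_sub_distrib]
    congr 1
    · simp [Finset.sum_ite_eq']
    · by_cases hPc : P c' <;> simp [hPc, Finset.sum_ite_eq']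
  have hAl : ∀ (i : Fin m) (c : Fin k), A (Sum.inl i) (g c) = if blk c = (i:ℕ) then 1 else 0 := by
    intro i c
    rcases hgc : g c with ⟨i', l⟩
    have h1 : A (Sum.inl i) (i', l) = if i' = i then 1 else 0 := rfl
    have h2 : blk c = (i' : ℕ) := by rw [hblkdef]; simp [hgc]
    rw [hgc] at *
    rw [h1, h2]
    by_cases h : i' = i
    · rw [if_pos h, if_pos (by exact_mod_cast congrArg Fin.val h)]
    · rw [if_neg h, if_neg (fun hv => h (Fin.ext hv))]
  have hAr : ∀ (p : Fin (m-1) × Fin (n-1)) (c : Fin k), A (Sum.inr p) (g c) =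
      if blk c = (p.1:ℕ) ∧ lv c ≤ (p.2:ℕ) then 1
      else if blk c = (p.1:ℕ)+1 ∧ lv c ≤ (p.2:ℕ) then -1 else 0 := by
    intro p c
    rcases hgc : g c with ⟨i', l⟩
    have h1 : A (Sum.inr p) (i', l) =
        if (i':ℕ) = (p.1:ℕ) ∧ (l:ℕ) ≤ (p.2:ℕ) then 1
        else if (i':ℕ) = (p.1:ℕ)+1 ∧ (l:ℕ) ≤ (p.2:ℕ) then -1 else 0 := rfl
    have h2 : blk c = (i' : ℕ) := by rw [hblkdef]; simp [hgc]
    have h3 : lv c = (l : ℕ) := by rw [hlvdef]; simp [hgc]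
    rw [hgc] at *
    rw [h1, h2, h3]
  -- characterization of the rows of `M`
  have hchar : ∀ r, (∃ i : Fin m, ∀ c, M r c = if blk c = (i:ℕ) ∧ ¬ P c then 1 else 0)
      ∨ (∃ p : Fin (m-1) × Fin (n-1), ∀ c, M r c =
          if blk c = (p.1:ℕ) ∧ lv c ≤ (p.2:ℕ) ∧ (P c → (p.2:ℕ) < lv (nxt c)) then 1
          else if blk c = (p.1:ℕ)+1 ∧ lv c ≤ (p.2:ℕ) ∧ (P c → (p.2:ℕ) < lv (nxt c)) then -1
          else 0) := by
    intro r
    rcases hr : f r with i | p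
    · left
      refine ⟨i, fun c => ?_⟩
      rw [hM, hr, hAl]
      by_cases hPc : P c
      · rw [if_pos hPc, hAl, hblk c hPc, if_neg (show ¬(blk c = (i:ℕ) ∧ ¬ P c) from fun hcond => hcond.2 hPc)]
        ring
      · rw [if_neg hPc, sub_zero]
        by_cases hb : blk c = (i:ℕ)
        · rw [if_pos hb, if_pos ⟨hb, hPc⟩]
        · rw [if_neg hb, if_neg (by tauto)]
    · right
      refine ⟨p, fun c => ?_⟩
      rw [hM, hr, hAr]
      by_cases hPc : P c
      · rw [if_pos hPc, hAr, hblk c hPc]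
        have hl := hlt c hPc
        have hPt : ∀ X : Prop, (P c → X) ↔ X := fun X => ⟨fun h => h hPc, fun h _ => h⟩
        simp only [hPt]
        split_ifs <;> omega
      · rw [if_neg hPc, sub_zero]
        have hPt : ∀ X : Prop, (P c → X) ↔ True :=
          fun X => iff_true_intro (fun h => absurd h hPc)
        simp only [hPt, and_true]
  -- uniqueness helper
  have uniq : ∀ (I J : ℕ) (c c' : Fin k), blk c = I → blk c' = I → lv c ≤ J → lv c' ≤ J →
      (P c → J < lv (nxt c)) → (P c' → J < lv (nxt c')) → c = c' := by
    intro I J c c' h1 h2 h3 h4 h5 h6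
    rcases lt_trichotomy (lv c) (lv c') with hlv | hlv | hlv
    · have hPc : P c := ⟨c', by rw [h2, h1], hlv⟩
      have := hmin c c' hPc (by rw [h2, h1]) hlv
      have := h5 hPc
      omega
    · exact hginj c c' (by rw [h1, h2]) hlv
    · have hPc : P c' := ⟨c, by rw [h2, h1], hlv⟩
      have := hmin c' c hPc (by rw [h2, h1]) hlv
      have := h6 hPc
      omega
  rw [← hMdet]
  apply det_mem_of_rows
  · intro r c
    rcases hchar r with ⟨i, hc⟩ | ⟨p, hc⟩ <;> rw [hc c] <;> split_ifs <;> norm_num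
  · intro r c c' h h'
    rcases hchar r with ⟨i, hc⟩ | ⟨p, hc⟩
    · have e1 : ∀ d, M r d = 1 → blk d = (i:ℕ) ∧ ¬ P d := by
        intro d hd
        rw [hc d] at hd
        split_ifs at hd with h1
        all_goals first | exact h1 | exact absurd hd (by norm_num)
      obtain ⟨hb, hp⟩ := e1 c h
      obtain ⟨hb', hp'⟩ := e1 c' h'
      rcases lt_trichotomy (lv c) (lv c') with hlv | hlv | hlv
      · exact absurd ⟨c', hb'.trans hb.symm, hlv⟩ hp
      · exact hginj c c' (hb.trans hb'.symm) hlv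
      · exact absurd ⟨c, hb.trans hb'.symm, hlv⟩ hp'
    · have e1 : ∀ d, M r d = 1 →
          blk d = (p.1:ℕ) ∧ lv d ≤ (p.2:ℕ) ∧ (P d → (p.2:ℕ) < lv (nxt d)) := by
        intro d hd
        rw [hc d] at hd
        split_ifs at hd with h1 h2
        all_goals first | exact h1 | exact absurd hd (by norm_num)
      obtain ⟨hb, hl, hq⟩ := e1 c h
      obtain ⟨hb', hl', hq'⟩ := e1 c' h'
      exact uniq (p.1:ℕ) (p.2:ℕ) c c' hb hb' hl hl' hq hq'
  · intro r c c' h h'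
    rcases hchar r with ⟨i, hc⟩ | ⟨p, hc⟩
    · rw [hc c] at h
      split_ifs at h
    · have e1 : ∀ d, M r d = -1 →
          blk d = (p.1:ℕ)+1 ∧ lv d ≤ (p.2:ℕ) ∧ (P d → (p.2:ℕ) < lv (nxt d)) := by
        intro d hd
        rw [hc d] at hd
        split_ifs at hd with h1 h2
        exact h2
      obtain ⟨hb, hl, hq⟩ := e1 c h
      obtain ⟨hb', hl', hq'⟩ := e1 c' h'
      exact uniq ((p.1:ℕ)+1) (p.2:ℕ) c c' hb hb' hl hl' hq hq'
end

section
/- For m = n = 3, with local links L\R = {(1,2),(2,3)} and remote link set R = {(1,3)}, the polytope P_{yz} defined by y ∈ Y together with the linking constraints y_i = A' z_{ik}, y_k = A'' z_{ik} for (i,k) ∈ L and z ≥ 0, is strictly larger than the convex hull of its integer points. In particular, the point given by y_{11}=y_{12}=y_{21}=y_{22}=1/2, y_{32}=3/4, y_{33}=1/4, z_{1121}=z_{2132}=z_{1222}=z_{1232}=1/2, z_{2232}=z_{2233}=z_{1132}=z_{1133}=1/4 (all other coordinates 0) lies in P_{yz} but not in the convex hull of the integer points of P_{yz}. -/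
open Finset

/-- Constraints attached to a link `(i,k)` with variables `w j l` (representing `z_{ijkl}`,
supported on `j ≤ l`): nonnegativity, and the marginal constraints
`y_{ij} = ∑_{l ≥ j} z_{ijkl}` and `y_{kl} = ∑_{j ≤ l} z_{ijkl}`. -/
def linkConstraints {m n : ℕ} (y : Fin m → Fin n → ℝ) (i k : Fin m)
    (w : Fin n → Fin n → ℝ) : Prop :=
  (∀ j l, 0 ≤ w j l) ∧ (∀ j l : Fin n, l < j → w j l = 0) ∧
  (∀ j, y i j = ∑ l, w j l) ∧ (∀ l, y k l = ∑ j, w j l)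

/-- The polytope `P_{yz}` for `m = n = 3` with links `L = {(1,2), (2,3), (1,3)}`:
points are `(y, z₁₂, z₂₃, z₁₃)`. -/
def Pyz : Set ((Fin 3 → Fin 3 → ℝ) × (Fin 3 → Fin 3 → ℝ) × (Fin 3 → Fin 3 → ℝ) ×
    (Fin 3 → Fin 3 → ℝ)) :=
  {p | p.1 ∈ threadingPolytope 3 3 ∧
       linkConstraints p.1 0 1 p.2.1 ∧
       linkConstraints p.1 1 2 p.2.2.1 ∧
       linkConstraints p.1 0 2 p.2.2.2}

/-- The fractional point `A` of the paper:
`y₁₁ = y₁₂ = y₂₁ = y₂₂ = 1/2`, `y₃₂ = 3/4`, `y₃₃ = 1/4`,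
`z₁₁₂₁ = z₂₁₃₂ = z₁₂₂₂ = z₁₂₃₂ = 1/2`, `z₂₂₃₂ = z₂₂₃₃ = z₁₁₃₂ = z₁₁₃₃ = 1/4`. -/
noncomputable def ptA : (Fin 3 → Fin 3 → ℝ) × (Fin 3 → Fin 3 → ℝ) × (Fin 3 → Fin 3 → ℝ) ×
    (Fin 3 → Fin 3 → ℝ) :=
  (!![1/2, 1/2, 0; 1/2, 1/2, 0; 0, 3/4, 1/4],
   !![1/2, 0, 0; 0, 1/2, 0; 0, 0, 0],
   !![0, 1/2, 0; 0, 1/4, 1/4; 0, 0, 0],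
   !![0, 1/4, 1/4; 0, 1/2, 0; 0, 0, 0])

/-! At a 0-1 point of `P_{yz}` with `z_{1133} = 1`, block 1 sits at position 1 and block 3 at
position 3, so block 2 sits either after block 1 (`z_{1122} + z_{1123} = 1`) or at position 1,
before block 3 (`z_{2133} = 1`). Hence `z_{1133} ≤ z_{1122} + z_{1123} + z_{2133}` is valid for
the convex hull of the 0-1 points, while `A` violates it by `1/4`. -/

namespace linkConstraints

variable {m n : ℕ} {y : Fin m → Fin n → ℝ} {i k : Fin m} {w : Fin n → Fin n → ℝ}

theorem le_left (h : linkConstraints y i k w) (j l : Fin n) : w j l ≤ y i j :=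
  h.2.2.1 j ▸ Finset.single_le_sum (fun l _ => h.1 j l) (Finset.mem_univ l)

theorem le_right (h : linkConstraints y i k w) (j l : Fin n) : w j l ≤ y k l :=
  h.2.2.2 l ▸ Finset.single_le_sum (fun j _ => h.1 j l) (Finset.mem_univ j)

end linkConstraints

abbrev PyzSpace : Type :=
  (Fin 3 → Fin 3 → ℝ) × (Fin 3 → Fin 3 → ℝ) × (Fin 3 → Fin 3 → ℝ) × (Fin 3 → Fin 3 → ℝ)

/-- `z_{1133} - z_{1122} - z_{1123} - z_{2133}`. -/
def remoteCut : PyzSpace →ₗ[ℝ] ℝ where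
  toFun p := p.2.2.2 0 2 - p.2.1 0 1 - p.2.1 0 2 - p.2.2.1 0 2
  map_add' p q := by simp only [Prod.fst_add, Prod.snd_add, Pi.add_apply]; ring
  map_smul' c p := by simp only [Prod.smul_fst, Prod.smul_snd, Pi.smul_apply, smul_eq_mul,
    RingHom.id_apply]; ring

/-- Chaining the marginal constraints along the links `(1,2)` and `(2,3)` gives
`z_{1122} + z_{1123} + z_{2133} ≥ y_{11} + y_{33} - 1 ≥ 2 z_{1133} - 1`. -/
theorem remoteCut_le_one_sub {p : PyzSpace} (hp : p ∈ Pyz) :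
    remoteCut p ≤ 1 - p.2.2.2 0 2 := by
  obtain ⟨⟨hsum, -, -⟩, h12, h23, h13⟩ := hp
  have hy2 := hsum 2
  have hz12 := h12.2.2.1 0
  have hz23 := h23.2.2.1 0
  simp only [Fin.sum_univ_three] at hy2 hz12 hz23
  simp only [remoteCut, LinearMap.coe_mk, AddHom.coe_mk]
  linarith [h12.le_right 0 0, h23.le_right 0 0, h23.le_right 0 1, h13.le_left 0 2,
    h13.le_right 0 2]

theorem remoteCut_nonpos {p : PyzSpace} (hp : p ∈ Pyz)
    (h : p.2.2.2 0 2 = 0 ∨ p.2.2.2 0 2 = 1) : remoteCut p ≤ 0 := by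
  rcases h with h | h
  · simp only [remoteCut, LinearMap.coe_mk, AddHom.coe_mk]
    linarith [hp.2.1.1 0 1, hp.2.1.1 0 2, hp.2.2.1.1 0 2]
  · linarith [remoteCut_le_one_sub hp]

theorem ptA_mem_Pyz : ptA ∈ Pyz := by
  refine ⟨⟨?_, ?_, ?_⟩, ?_, ?_, ?_⟩ <;>
    simp [ptA, linkConstraints, Fin.forall_fin_succ, Fin.sum_univ_three, Finset.sum_filter] <;>
    norm_num

theorem remoteCut_ptA : remoteCut ptA = 1 / 4 := by
  simp [remoteCut, ptA]

/-- For `m = n = 3` with the remote link `(1,3)`, the polytope `P_{yz}` is strictly larger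
than the convex hull of its integer (0-1) points: the point `A` lies in `P_{yz}` but not in
the convex hull of the 0-1 points of `P_{yz}`. -/
theorem Pyz_not_integral :
    ptA ∈ Pyz ∧
    ptA ∉ convexHull ℝ {p ∈ Pyz |
      (∀ i j, p.1 i j = 0 ∨ p.1 i j = 1) ∧
      (∀ j l, p.2.1 j l = 0 ∨ p.2.1 j l = 1) ∧
      (∀ j l, p.2.2.1 j l = 0 ∨ p.2.2.1 j l = 1) ∧
      (∀ j l, p.2.2.2 j l = 0 ∨ p.2.2.2 j l = 1)} := by
  refine ⟨ptA_mem_Pyz, fun hA => ?_⟩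
  have hA_le : remoteCut ptA ≤ 0 := by
    refine convexHull_min ?_ (convex_halfSpace_le remoteCut.isLinear 0) hA
    rintro p ⟨hp, -, -, -, h13⟩
    exact remoteCut_nonpos hp (h13 0 2)
  linarith [remoteCut_ptA]
end

section
/- Every point y of the polytope Y can be written as a convex combination of 0-1 points of Y (equivalently, as a convex combination of indicator vectors of feasible threadings). -/
/-!
If `y ∈ Y` is not a 0-1 point, let `r i` be the first column in which row `i` of `y` is nonzero.
The prefix-sum inequalities force `r` to be weakly increasing, so the indicator `v` of `r` is a
0-1 point of `Y`. With `t = min_i y i (r i) ∈ (0, 1)`, the point `y' = (y - t v) / (1 - t)` lies in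
`Y` again and has strictly fewer nonzero entries, and `y` lies on the segment `[v, y']`; induction on
the number of nonzero entries finishes the proof.
-/

open Finset

section Peeling

variable {𝕜 E : Type*}

theorem subset_convexHull_of_exists_mem_segment [Semiring 𝕜] [PartialOrder 𝕜] [AddCommMonoid E]
    [Module 𝕜 E] {P S : Set E} (μ : E → ℕ)
    (h : ∀ y ∈ P, y ∉ S → ∃ v ∈ S, ∃ y' ∈ P, μ y' < μ y ∧ y ∈ segment 𝕜 v y') :
    P ⊆ convexHull 𝕜 S := by
  intro y hy
  induction y using (measure μ).wf.induction with
  | _ y ih =>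
    by_cases hyS : y ∈ S
    · exact subset_convexHull 𝕜 S hyS
    obtain ⟨v, hv, y', hy', hlt, hseg⟩ := h y hy hyS
    exact (convex_convexHull 𝕜 S).segment_subset (subset_convexHull 𝕜 S hv) (ih y' hlt hy') hseg

lemma mem_segment_inv_smul_sub_smul [Field 𝕜] [LinearOrder 𝕜] [IsStrictOrderedRing 𝕜]
    [AddCommGroup E] [Module 𝕜 E] {t : 𝕜} (ht₀ : 0 ≤ t) (ht₁ : t < 1) (v y : E) :
    y ∈ segment 𝕜 v ((1 - t)⁻¹ • (y - t • v)) :=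
  ⟨t, 1 - t, ht₀, sub_nonneg.2 ht₁.le, add_sub_cancel t 1, by
    rw [smul_inv_smul₀ (sub_ne_zero.2 ht₁.ne'), add_sub_cancel]⟩

end Peeling

lemma exists_ne_zero_forall_lt_eq_zero {α M : Type*} [LinearOrder α] [WellFoundedLT α] [Zero M]
    {f : α → M} (hf : f ≠ 0) : ∃ r, f r ≠ 0 ∧ ∀ j < r, f j = 0 := by
  obtain ⟨r, hr, hmin⟩ := wellFounded_lt.has_min {j | f j ≠ 0} (Function.ne_iff.1 hf)
  exact ⟨r, hr, fun j hj => by_contra fun h => hmin j h hj⟩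

section PrefixSums

variable {α M : Type*} [LinearOrder α] [Fintype α]

lemma sum_filter_le_eq_zero [AddCommMonoid M] {f : α → M} {r j : α} (hf : ∀ l < r, f l = 0)
    (hj : j < r) : ∑ l ∈ univ.filter (· ≤ j), f l = 0 :=
  sum_eq_zero fun l hl => hf l ((mem_filter.1 hl).2.trans_lt hj)

lemma le_sum_filter_le [AddCommMonoid M] [PartialOrder M] [IsOrderedAddMonoid M] {f : α → M}
    (hf : ∀ l, 0 ≤ f l) {r j : α} (hrj : r ≤ j) : f r ≤ ∑ l ∈ univ.filter (· ≤ j), f l :=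
  single_le_sum (fun l _ => hf l) (by simpa using hrj)

end PrefixSums

section Threading

variable {m n : ℕ}

def threadingCone (m n : ℕ) : Set (Fin m → Fin n → ℝ) :=
  {y | (∀ (i : Fin m) (hi : (i : ℕ) + 1 < m) (j : Fin n), (j : ℕ) + 1 < n →
         ∑ l ∈ univ.filter (· ≤ j), y ⟨(i : ℕ) + 1, hi⟩ l ≤ ∑ l ∈ univ.filter (· ≤ j), y i l) ∧
       (∀ i j, 0 ≤ y i j)}

lemma mem_threadingPolytope_iff {y : Fin m → Fin n → ℝ} :
    y ∈ threadingPolytope m n ↔ y ∈ threadingCone m n ∧ ∀ i, ∑ j, y i j = 1 := by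
  simp only [threadingPolytope, threadingCone, Set.mem_ofPred_eq]
  tauto

lemma smul_mem_threadingCone {c : ℝ} (hc : 0 ≤ c) {y : Fin m → Fin n → ℝ}
    (hy : y ∈ threadingCone m n) : c • y ∈ threadingCone m n := by
  refine ⟨fun i hi j hj => ?_, fun i j => mul_nonneg hc (hy.2 i j)⟩
  simp only [Pi.smul_apply, smul_eq_mul, ← mul_sum]
  exact mul_le_mul_of_nonneg_left (hy.1 i hi j hj) hc

lemma le_succ_of_mem_threadingCone {y : Fin m → Fin n → ℝ}
    (hy : y ∈ threadingCone m n) {r : Fin m → Fin n} (hr : ∀ i, y i (r i) ≠ 0)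
    (hr₀ : ∀ i, ∀ j < r i, y i j = 0) (i : Fin m) (hi : (i : ℕ) + 1 < m) :
    r i ≤ r ⟨i + 1, hi⟩ := by
  by_contra! hlt
  have hj : (r ⟨i + 1, hi⟩ : ℕ) + 1 < n := by have := (r i).isLt; omega
  have hchain := hy.1 i hi _ hj
  rw [sum_filter_le_eq_zero (hr₀ i) hlt] at hchain
  have hpos := lt_of_le_of_ne (hy.2 _ _) (hr ⟨i + 1, hi⟩).symm
  linarith [le_sum_filter_le (hy.2 ⟨i + 1, hi⟩) (le_refl (r ⟨i + 1, hi⟩))]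

lemma pi_single_mem_threadingPolytope {r : Fin m → Fin n}
    (hr : ∀ (i : Fin m) (hi : (i : ℕ) + 1 < m), r i ≤ r ⟨i + 1, hi⟩) :
    (fun i => Pi.single (r i) (1 : ℝ)) ∈
      {y ∈ threadingPolytope m n | ∀ i j, y i j = 0 ∨ y i j = 1} := by
  refine ⟨mem_threadingPolytope_iff.2 ⟨⟨fun i hi j _ => ?_, fun i j => ?_⟩, fun i => ?_⟩,
    fun i j => ?_⟩
  · simp only [sum_pi_single', mem_filter, mem_univ, true_and]
    split_ifs with h₁ h₂
    · exact le_rfl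
    · exact absurd ((hr i hi).trans h₁) h₂
    all_goals norm_num
  · dsimp only; rw [Pi.single_apply]; split_ifs <;> norm_num
  · simp
  · dsimp only; rw [Pi.single_apply]; split_ifs <;> simp

lemma sub_smul_pi_single_mem_threadingCone {y : Fin m → Fin n → ℝ} (hy : y ∈ threadingCone m n)
    {r : Fin m → Fin n} (hr₀ : ∀ i, ∀ j < r i, y i j = 0)
    (hmono : ∀ (i : Fin m) (hi : (i : ℕ) + 1 < m), r i ≤ r ⟨i + 1, hi⟩)
    {t : ℝ} (ht : ∀ i, t ≤ y i (r i)) :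
    y - t • (fun i => Pi.single (r i) 1 : Fin m → Fin n → ℝ) ∈ threadingCone m n := by
  refine ⟨fun i hi j hj => ?_, fun i j => ?_⟩
  · simp only [Pi.sub_apply, Pi.smul_apply, smul_eq_mul, sum_sub_distrib, ← mul_sum,
      sum_pi_single', mem_filter, mem_univ, true_and]
    have hchain := hy.1 i hi j hj
    by_cases hri : r i ≤ j
    · by_cases hri' : r ⟨i + 1, hi⟩ ≤ j
      · simp only [if_pos hri, if_pos hri']
        linarith
      · rw [if_pos hri, if_neg hri', sum_filter_le_eq_zero (hr₀ _) (not_le.1 hri')]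
        linarith [ht i, le_sum_filter_le (hy.2 i) hri]
    · rw [if_neg hri, if_neg fun h => hri ((hmono i hi).trans h)]
      linarith
  · simp only [Pi.sub_apply, Pi.smul_apply, smul_eq_mul, Pi.single_apply]
    split_ifs with h
    · subst h; linarith [ht i]
    · linarith [hy.2 i j]

lemma card_ne_zero_sub_smul_pi_single_lt {y : Fin m → Fin n → ℝ} {r : Fin m → Fin n}
    (hr : ∀ i, y i (r i) ≠ 0) (i₀ : Fin m) :
    #{p : Fin m × Fin n |
        (y - y i₀ (r i₀) • (fun i => Pi.single (r i) 1 : Fin m → Fin n → ℝ)) p.1 p.2 ≠ 0} <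
      #{p : Fin m × Fin n | y p.1 p.2 ≠ 0} := by
  refine card_lt_card (Finset.ssubset_of_subset_of_ssubset ?_
    (erase_ssubset (a := (i₀, r i₀)) (by simpa using hr i₀)))
  rintro ⟨i, j⟩ hp
  simp only [mem_filter, mem_univ, true_and, mem_erase, ne_eq, Prod.mk.injEq, Pi.sub_apply,
    Pi.smul_apply, smul_eq_mul, Pi.single_apply] at hp ⊢
  refine ⟨?_, fun hy₀ => ?_⟩
  · rintro ⟨rfl, rfl⟩
    simp at hp
  · split_ifs at hp with hj
    · exact hr i (hj ▸ hy₀)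
    · simp [hy₀] at hp

theorem exists_mem_segment_of_mem_threadingPolytope {y : Fin m → Fin n → ℝ}
    (hy : y ∈ threadingPolytope m n) (hy01 : ¬ ∀ i j, y i j = 0 ∨ y i j = 1) :
    ∃ v ∈ {y ∈ threadingPolytope m n | ∀ i j, y i j = 0 ∨ y i j = 1},
      ∃ y' ∈ threadingPolytope m n,
        #{p : Fin m × Fin n | y' p.1 p.2 ≠ 0} < #{p : Fin m × Fin n | y p.1 p.2 ≠ 0} ∧
          y ∈ segment ℝ v y' := by
  obtain ⟨hcone, hsum⟩ := mem_threadingPolytope_iff.1 hy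
  have : Nonempty (Fin m) := ⟨(not_forall.1 hy01).choose⟩
  choose r hr hr₀ using fun i =>
    exists_ne_zero_forall_lt_eq_zero (f := y i) fun h => by simpa [h] using hsum i
  have hmono := le_succ_of_mem_threadingCone hcone hr hr₀
  set v : Fin m → Fin n → ℝ := fun i => Pi.single (r i) 1
  obtain ⟨i₀, -, hi₀⟩ := exists_mem_eq_inf' univ_nonempty fun i => y i (r i)
  set t := y i₀ (r i₀)
  have ht : ∀ i, t ≤ y i (r i) := fun i => hi₀ ▸ inf'_le _ (mem_univ i)
  have hw := sub_smul_pi_single_mem_threadingCone hcone hr₀ hmono ht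
  have hwsum : ∀ i, ∑ j, (y - t • v) i j = 1 - t := fun i => by
    simp [v, sum_sub_distrib, hsum, ← mul_sum]
  have ht₁ : t < 1 := by
    refine lt_of_le_of_ne ?_ fun h₁ => hy01 ?_
    · linarith [hwsum i₀ ▸ sum_nonneg fun j _ => hw.2 i₀ j]
    · have hw₀ : y - t • v = 0 := funext fun i => funext fun j =>
        (sum_eq_zero_iff_of_nonneg fun j _ => hw.2 i j).1 (by rw [hwsum, h₁, sub_self]) j
          (mem_univ j)
      rw [h₁, one_smul, sub_eq_zero] at hw₀
      exact hw₀ ▸ (pi_single_mem_threadingPolytope hmono).2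
  refine ⟨v, pi_single_mem_threadingPolytope hmono, (1 - t)⁻¹ • (y - t • v),
    mem_threadingPolytope_iff.2 ⟨smul_mem_threadingCone (inv_pos.2 (sub_pos.2 ht₁)).le hw,
      fun i => ?_⟩, ?_, mem_segment_inv_smul_sub_smul (hcone.2 i₀ (r i₀)) ht₁ v y⟩
  · simp only [Pi.smul_apply, smul_eq_mul, ← mul_sum, hwsum]
    exact inv_mul_cancel₀ (sub_ne_zero.2 ht₁.ne')
  · simpa [smul_eq_zero, sub_ne_zero.2 ht₁.ne'] using card_ne_zero_sub_smul_pi_single_lt hr i₀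

end Threading

/-- Every point of the threading polytope `Y` is a convex combination of the 0-1 points
of `Y` (the indicator vectors of feasible threadings). -/
theorem threadingPolytope_subset_convexHull_zero_one (m n : ℕ) :
    threadingPolytope m n ⊆
      convexHull ℝ {y ∈ threadingPolytope m n | ∀ i j, y i j = 0 ∨ y i j = 1} :=
  subset_convexHull_of_exists_mem_segment (fun y => #{p : Fin m × Fin n | y p.1 p.2 ≠ 0})
    fun _ hy hyS => exists_mem_segment_of_mem_threadingPolytope hy fun h => hyS ⟨hy, h⟩
end

section
/- Let L = {(i,k_1),...,(i,k_r)} be a star with common root i and k_1 < ... < k_r, with interaction cost matrices d_{i k_t}. For a threading fixing block i at position j and block k_r at position l (j ≤ l), the minimal total star cost v satisfies the recursion: v(L; r_i = j, r_{k_r} = l) = d_{i j k_r l} + min_{j ≤ s ≤ l} v(L'; r_i = j, r_{k_{r-1}} = s), where L' = L \ {(i,k_r)}. Consequently the matrix of optimal star costs equals (...((d_{i k_1} ⊗ d_{i k_2}) ⊗ ...) ⊗ d_{i k_r}), where (A ⊗ B)(j,l) = min_{j ≤ s ≤ l} A(j,s) + B(j,l). -/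
/-- Position assignments for a star with `r+1` links rooted at a block placed at
position `j`: weakly increasing tuples `s` of positions with `j ≤ s 0` and last
entry fixed to `l`. -/
noncomputable def starAdmissible (n r : ℕ) (j l : Fin n) : Finset (Fin (r + 1) → Fin n) :=
  letI := Classical.decPred
    (fun s : Fin (r + 1) → Fin n => Monotone s ∧ j ≤ s 0 ∧ s (Fin.last r) = l)
  Finset.univ.filter (fun s => Monotone s ∧ j ≤ s 0 ∧ s (Fin.last r) = l)

/-- `v(L; r_i = j, r_{k_last} = l)`: the minimal total cost `∑_t d_t(j, s_t)` of the star
over feasible assignments `j ≤ s_1 ≤ ... ≤ s_last = l` (`+∞` if none exists). -/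
noncomputable def starCost (n r : ℕ) (d : Fin (r + 1) → Fin n → Fin n → WithTop ℝ)
    (j l : Fin n) : WithTop ℝ :=
  if h : (starAdmissible n r j l).Nonempty then
    (starAdmissible n r j l).inf' h (fun s => ∑ t, d t j (s t))
  else ⊤

/-- `(A ⊗ B)(j,l) = (min_{j ≤ s ≤ l} A(j,s)) + B(j,l)` (`+∞` if `j > l`). -/
noncomputable def otimesF (n : ℕ) (A B : Fin n → Fin n → WithTop ℝ) :
    Fin n → Fin n → WithTop ℝ :=
  fun j l =>
    if h : j ≤ l then (Finset.Icc j l).inf' (Finset.nonempty_Icc.mpr h) (A j) + B j l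
    else ⊤

/-!
Splitting off the last link: an admissible assignment `j ≤ s_1 ≤ … ≤ s_{r+1} = l` is the same as
a choice of `s_r = s ∈ [j, l]` together with an admissible assignment of the shorter star ending at
`s`, and the cost splits as `d_{r+1}(j, l)` plus the cost of the shorter star. Minimising first over
the shorter assignment and then over `s` gives the recursion, which is exactly one `⊗`-step; the
product formula follows by induction on the number of links.
-/

theorem Monotone.fin_snoc {α : Type*} [Preorder α] {m : ℕ} {q : Fin (m + 1) → α} {a : α}
    (hq : Monotone q) (ha : q (Fin.last m) ≤ a) :
    Monotone (Fin.snoc (α := fun _ => α) q a) := by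
  refine Fin.monotone_iff_le_succ.mpr fun i => ?_
  induction i using Fin.lastCases with
  | last => simpa only [Fin.succ_last, Fin.snoc_castSucc, Fin.snoc_last] using ha
  | cast i =>
    simpa only [Fin.succ_castSucc, Fin.snoc_castSucc] using hq (Fin.castSucc_le_succ i)

section Star

variable {n r : ℕ} {j l : Fin n}

theorem mem_starAdmissible {s : Fin (r + 1) → Fin n} :
    s ∈ starAdmissible n r j l ↔ Monotone s ∧ j ≤ s 0 ∧ s (Fin.last r) = l := by
  classical
  simp [starAdmissible]

theorem starAdmissible_nonempty (h : j ≤ l) : (starAdmissible n r j l).Nonempty :=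
  ⟨fun _ => l, mem_starAdmissible.mpr ⟨monotone_const, h, rfl⟩⟩

theorem starCost_eq_inf' (d : Fin (r + 1) → Fin n → Fin n → WithTop ℝ) (h : j ≤ l) :
    starCost n r d j l =
      (starAdmissible n r j l).inf' (starAdmissible_nonempty h) fun s => ∑ t, d t j (s t) :=
  dif_pos _

theorem starCost_le {d : Fin (r + 1) → Fin n → Fin n → WithTop ℝ} {s : Fin (r + 1) → Fin n}
    (hs : s ∈ starAdmissible n r j l) : starCost n r d j l ≤ ∑ t, d t j (s t) := by
  rw [starCost, dif_pos ⟨s, hs⟩]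
  exact Finset.inf'_le _ hs

theorem exists_starCost_eq (d : Fin (r + 1) → Fin n → Fin n → WithTop ℝ) (h : j ≤ l) :
    ∃ s ∈ starAdmissible n r j l, starCost n r d j l = ∑ t, d t j (s t) := by
  rw [starCost_eq_inf' d h]
  exact Finset.exists_mem_eq_inf' _ _

theorem snoc_mem_starAdmissible {q : Fin (r + 1) → Fin n} {s : Fin n}
    (hq : q ∈ starAdmissible n r j s) (hsl : s ≤ l) :
    (Fin.snoc q l : Fin (r + 2) → Fin n) ∈ starAdmissible n (r + 1) j l := by
  obtain ⟨hmono, hj, rfl⟩ := mem_starAdmissible.mp hq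
  refine mem_starAdmissible.mpr ⟨hmono.fin_snoc hsl, ?_, Fin.snoc_last _ _⟩
  simpa only [← Fin.castSucc_zero, Fin.snoc_castSucc] using hj

theorem init_mem_starAdmissible {p : Fin (r + 2) → Fin n}
    (hp : p ∈ starAdmissible n (r + 1) j l) :
    Fin.init p ∈ starAdmissible n r j (p (Fin.last r).castSucc) := by
  obtain ⟨hmono, hj, -⟩ := mem_starAdmissible.mp hp
  exact mem_starAdmissible.mpr ⟨hmono.comp Fin.strictMono_castSucc.monotone, hj, rfl⟩

theorem apply_castSucc_last_mem_Icc {p : Fin (r + 2) → Fin n} (hp : p ∈ starAdmissible n (r + 1) j l) :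
    p (Fin.last r).castSucc ∈ Finset.Icc j l := by
  obtain ⟨hmono, hj, rfl⟩ := mem_starAdmissible.mp hp
  exact Finset.mem_Icc.mpr ⟨hj.trans (hmono (Fin.zero_le _)), hmono (Fin.le_last _)⟩

theorem starCost_succ (d : Fin (r + 2) → Fin n → Fin n → WithTop ℝ) (hjl : j ≤ l) :
    starCost n (r + 1) d j l =
      d (Fin.last (r + 1)) j l +
        (Finset.Icc j l).inf' (Finset.nonempty_Icc.mpr hjl)
          fun s => starCost n r (fun t => d t.castSucc) j s := by
  apply le_antisymm
  · obtain ⟨s, hs, hs_min⟩ := Finset.exists_mem_eq_inf' (Finset.nonempty_Icc.mpr hjl)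
      fun s => starCost n r (fun t => d t.castSucc) j s
    obtain ⟨hjs, hsl⟩ := Finset.mem_Icc.mp hs
    obtain ⟨q, hq, hq_min⟩ := exists_starCost_eq (fun t => d t.castSucc) hjs
    calc starCost n (r + 1) d j l
        ≤ ∑ t, d t j ((Fin.snoc q l : Fin (r + 2) → Fin n) t) :=
          starCost_le (snoc_mem_starAdmissible hq hsl)
      _ = _ := by
          rw [hs_min, hq_min, Fin.sum_univ_castSucc, add_comm]
          simp only [Fin.snoc_castSucc, Fin.snoc_last]
  · obtain ⟨p, hp, hp_min⟩ := exists_starCost_eq d hjl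
    calc _ ≤ d (Fin.last (r + 1)) j l +
            starCost n r (fun t => d t.castSucc) j (p (Fin.last r).castSucc) := by
          gcongr
          exact Finset.inf'_le _ (apply_castSucc_last_mem_Icc hp)
      _ ≤ d (Fin.last (r + 1)) j l + ∑ t, d t.castSucc j (Fin.init p t) := by
          gcongr
          exact starCost_le (init_mem_starAdmissible hp)
      _ = starCost n (r + 1) d j l := by
          rw [hp_min, Fin.sum_univ_castSucc fun t => d t j (p t), (mem_starAdmissible.mp hp).2.2, add_comm]
          rfl

theorem starCost_zero (d : Fin 1 → Fin n → Fin n → WithTop ℝ) (h : j ≤ l) :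
    starCost n 0 d j l = d 0 j l := by
  obtain ⟨s, hs, hs_min⟩ := exists_starCost_eq d h
  rw [hs_min, Fin.sum_univ_one]
  exact congrArg (d 0 j) (mem_starAdmissible.mp hs).2.2

end Star

theorem starCost_eq_foldl_otimesF {n : ℕ} :
    ∀ {r : ℕ} (d : Fin (r + 1) → Fin n → Fin n → WithTop ℝ) {j l : Fin n}, j ≤ l →
      starCost n r d j l = ((List.ofFn fun t : Fin r => d t.succ).foldl (otimesF n) (d 0)) j l
  | 0, d, _, _, h => by simpa using starCost_zero d h
  | r + 1, d, j, l, h => by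
    have h_ofFn : (List.ofFn fun t : Fin (r + 1) => d t.succ) =
        (List.ofFn fun t : Fin r => d t.castSucc.succ) ++ [d (Fin.last (r + 1))] := by
      simpa only [Fin.succ_castSucc, Fin.succ_last, List.concat_eq_append] using List.ofFn_succ' fun t => d t.succ
    rw [h_ofFn, List.foldl_concat, otimesF, dif_pos h, starCost_succ d h, add_comm]
    congr 1
    refine Finset.inf'_congr _ rfl fun s hs => ?_
    simpa using starCost_eq_foldl_otimesF (fun t => d t.castSucc) (Finset.mem_Icc.mp hs).1

/-- For a star `L = {(i,k_1),...,(i,k_r)}`, the optimal star costs satisfy the dynamic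
programming recursion
`v(L; r_i = j, r_{k_r} = l) = d_{i j k_r l} + min_{j ≤ s ≤ l} v(L'; r_i = j, r_{k_{r-1}} = s)`
(where `L' = L \ {(i,k_r)}`), and consequently the matrix of optimal star costs equals the
left-to-right `⊗`-product `(...((d_{ik_1} ⊗ d_{ik_2}) ⊗ ...) ⊗ d_{ik_r}`. -/
theorem starCost_recursion_and_otimes (n r : ℕ)
    (d : Fin (r + 1) → Fin n → Fin n → WithTop ℝ) :
    (∀ (d' : Fin (r + 2) → Fin n → Fin n → WithTop ℝ) (j l : Fin n) (hjl : j ≤ l),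
      starCost n (r + 1) d' j l =
        d' (Fin.last (r + 1)) j l +
          (Finset.Icc j l).inf' (Finset.nonempty_Icc.mpr hjl)
            (fun s => starCost n r (fun t => d' t.castSucc) j s)) ∧
    (∀ j l : Fin n, j ≤ l →
      starCost n r d j l =
        ((List.ofFn (fun t : Fin r => d t.succ)).foldl (otimesF n) (d 0)) j l) :=
  ⟨fun d' _ _ hjl => starCost_succ d' hjl, fun _ _ => starCost_eq_foldl_otimesF d⟩
end

section
/- The cost-splitting dual satisfies the polyhedral characterization: z_CS = min{cx : x ∈ conv{x ∈ Z_+^n : A¹x ≤ b¹} ∩ conv{x ∈ Z_+^n : A²x ≤ b²}}, where z_CS = max_u [ min{(c-u)x¹ : A¹x¹ ≤ b¹, x¹ ∈ Z_+^n} + min{u x² : A²x² ≤ b², x² ∈ Z_+^n} ]. -/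
/-!
Weak duality holds because a linear function attains its minimum over the convex hull of a finite
set on the set itself, so for `x ∈ conv S¹ ∩ conv S²` the two inner minima are at most
`(c - u) x` and `u x`, which add up to `c x`. For the converse, if `z` lies strictly below `c` on
`conv S¹ ∩ conv S²`, the compact convex set `{(y - x, c x) : x ∈ conv S¹, y ∈ conv S²}` misses the
ray `{0} × (-∞, z]`. A separating hyperplane `g d + α t` has `α ≥ 0`; perturbing `α` to be positive
(finitely many strict inequalities) makes `u = g / α` a multiplier whose dual value exceeds `z`.
-/

open Set Filter Topology Matrix

noncomputable def costSplittingValue {ι : Type*} [Fintype ι] (c : ι → ℝ) (T₁ T₂ : Set (ι → ℝ))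
    (u : ι → ℝ) : ℝ :=
  sInf ((fun x => (c - u) ⬝ᵥ x) '' T₁) + sInf ((fun y => u ⬝ᵥ y) '' T₂)

theorem LinearMap.csInf_image_le_of_mem_convexHull {E : Type*} [AddCommGroup E] [Module ℝ E]
    (f : E →ₗ[ℝ] ℝ) {T : Set E} (hT : BddBelow (f '' T)) {x : E} (hx : x ∈ convexHull ℝ T) :
    sInf (f '' T) ≤ f x := by
  obtain ⟨y, hy, hyx⟩ :=
    (f.concaveOn (convex_convexHull ℝ T)).exists_le_of_mem_convexHull (subset_convexHull ℝ T) hx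
  exact (csInf_le hT (mem_image_of_mem f hy)).trans hyx

theorem LinearMap.exists_dotProduct_add_mul_eq {ι : Type*} [Fintype ι]
    (f : ((ι → ℝ) × ℝ) →ₗ[ℝ] ℝ) : ∃ (g : ι → ℝ) (β : ℝ), ∀ d t, f (d, t) = g ⬝ᵥ d + β * t := by
  classical
  refine ⟨(dotProductEquiv ℝ ι).symm (f ∘ₗ LinearMap.inl ℝ _ ℝ), f (0, 1), fun d t => ?_⟩
  have hsplit : f (d, t) = f (d, 0) + t • f (0, 1) := by
    rw [← map_smul, ← map_add]; simp
  rw [hsplit, ← dotProductEquiv_apply_apply, LinearEquiv.apply_symm_apply, smul_eq_mul, mul_comm]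
  rfl

theorem Set.Finite.exists_pos_forall_pos_add_mul {P : Type*} {T : Set P} (hT : T.Finite)
    (a b : P → ℝ) {α : ℝ} (hα : 0 ≤ α) (h : ∀ p ∈ T, 0 < a p + α * b p) :
    ∃ β, 0 < β ∧ ∀ p ∈ T, 0 < a p + β * b p := by
  have hev : ∀ᶠ β in 𝓝[>] α, ∀ p ∈ T, 0 < a p + β * b p := by
    rw [hT.eventually_all]
    intro p hp
    have hcont : Continuous fun β => a p + β * b p := by fun_prop
    exact nhdsWithin_le_nhds ((hcont.tendsto α).eventually (lt_mem_nhds (h p hp)))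
  obtain ⟨β, hβ, hαβ⟩ := (hev.and self_mem_nhdsWithin).exists
  exact ⟨β, hα.trans_lt hαβ, hβ⟩

theorem nonpos_of_forall_le_lt_mul {β b z : ℝ} (h : ∀ s ≤ z, b < β * s) : β ≤ 0 := by
  by_contra! hβ
  have hz := h z le_rfl
  have hs := h (z - (β * z - b) / β) (sub_le_self _ (div_nonneg (by linarith) hβ.le))
  rw [mul_sub, mul_div_cancel₀ _ hβ.ne'] at hs
  linarith

section CostSplitting

variable {ι : Type*} [Fintype ι] {c : ι → ℝ} {T₁ T₂ : Set (ι → ℝ)}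

theorem costSplittingValue_le (hT₁ : T₁.Finite) (hT₂ : T₂.Finite) (u : ι → ℝ) {x : ι → ℝ}
    (hx₁ : x ∈ convexHull ℝ T₁) (hx₂ : x ∈ convexHull ℝ T₂) :
    costSplittingValue c T₁ T₂ u ≤ c ⬝ᵥ x :=
  calc costSplittingValue c T₁ T₂ u ≤ (c - u) ⬝ᵥ x + u ⬝ᵥ x :=
        add_le_add
          ((dotProductBilin ℝ ℝ (c - u)).csInf_image_le_of_mem_convexHull
            (hT₁.image _).bddBelow hx₁)
          ((dotProductBilin ℝ ℝ u).csInf_image_le_of_mem_convexHull (hT₂.image _).bddBelow hx₂)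
    _ = c ⬝ᵥ x := by rw [sub_dotProduct, sub_add_cancel]

theorem lt_costSplittingValue (hT₁ : T₁.Finite) (hT₂ : T₂.Finite) (hne₁ : T₁.Nonempty)
    (hne₂ : T₂.Nonempty) {u : ι → ℝ} {z : ℝ}
    (h : ∀ x ∈ T₁, ∀ y ∈ T₂, z < (c - u) ⬝ᵥ x + u ⬝ᵥ y) : z < costSplittingValue c T₁ T₂ u := by
  obtain ⟨x, hx, hxmin⟩ := (hne₁.image ((c - u) ⬝ᵥ ·)).csInf_mem (hT₁.image _)
  obtain ⟨y, hy, hymin⟩ := (hne₂.image (u ⬝ᵥ ·)).csInf_mem (hT₂.image _)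
  rw [costSplittingValue, ← hxmin, ← hymin]
  exact h x hx y hy

theorem exists_dotProduct_separation_of_forall_lt {P₁ P₂ : Set (ι → ℝ)} (hP₁ : IsCompact P₁)
    (hP₁c : Convex ℝ P₁) (hP₂ : IsCompact P₂) (hP₂c : Convex ℝ P₂) {z : ℝ}
    (hz : ∀ x ∈ P₁ ∩ P₂, z < c ⬝ᵥ x) :
    ∃ (g : ι → ℝ) (α : ℝ), 0 ≤ α ∧ ∀ x ∈ P₁, ∀ y ∈ P₂, 0 < g ⬝ᵥ (y - x) + α * (c ⬝ᵥ x - z) := by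
  let Φ : ((ι → ℝ) × (ι → ℝ)) →ₗ[ℝ] (ι → ℝ) × ℝ :=
    LinearMap.prod (LinearMap.snd ℝ _ _ - LinearMap.fst ℝ _ _)
      (dotProductBilin ℝ ℝ c ∘ₗ LinearMap.fst ℝ _ _)
  have hdisj : Disjoint (Φ '' P₁ ×ˢ P₂) ({0} ×ˢ Iic z) := by
    rw [Set.disjoint_left]
    rintro _ ⟨⟨x, y⟩, ⟨hx, hy⟩, rfl⟩ ⟨hxy, hcx⟩
    obtain rfl : y = x := sub_eq_zero.1 hxy
    exact (hz y ⟨hx, hy⟩).not_ge hcx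
  obtain ⟨f, a, b, hfK, hab, hfR⟩ := geometric_hahn_banach_compact_closed
    ((hP₁c.prod hP₂c).linear_image Φ) ((hP₁.prod hP₂).image Φ.continuous_of_finiteDimensional)
    ((convex_singleton 0).prod (convex_Iic z)) (isClosed_singleton.prod isClosed_Iic) hdisj
  obtain ⟨g, β, hf⟩ := f.toLinearMap.exists_dotProduct_add_mul_eq
  replace hf : ∀ d t, f (d, t) = g ⬝ᵥ d + β * t := hf
  have hray : ∀ s ≤ z, b < β * s := fun s hs => by
    simpa [hf] using hfR (0, s) ⟨rfl, hs⟩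
  refine ⟨-g, -β, neg_nonneg.2 (nonpos_of_forall_le_lt_mul hray), fun x hx y hy => ?_⟩
  have hK : g ⬝ᵥ (y - x) + β * (c ⬝ᵥ x) < a := by
    simpa [Φ, hf] using hfK _ ⟨(x, y), ⟨hx, hy⟩, rfl⟩
  have := hray z le_rfl
  rw [neg_dotProduct]
  linarith

theorem exists_lt_costSplittingValue (hT₁ : T₁.Finite) (hT₂ : T₂.Finite) (hne₁ : T₁.Nonempty)
    (hne₂ : T₂.Nonempty) {z : ℝ} (hz : ∀ x ∈ convexHull ℝ T₁ ∩ convexHull ℝ T₂, z < c ⬝ᵥ x) :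
    ∃ u, z < costSplittingValue c T₁ T₂ u := by
  obtain ⟨g, α, hα, hsep⟩ := exists_dotProduct_separation_of_forall_lt
    (hT₁.isCompact_convexHull ℝ) (convex_convexHull ℝ T₁)
    (hT₂.isCompact_convexHull ℝ) (convex_convexHull ℝ T₂) hz
  obtain ⟨β, hβ, hsep'⟩ := (hT₁.prod hT₂).exists_pos_forall_pos_add_mul
    (fun p => g ⬝ᵥ (p.2 - p.1)) (fun p => c ⬝ᵥ p.1 - z) hα
    fun p hp => hsep _ (subset_convexHull ℝ _ hp.1) _ (subset_convexHull ℝ _ hp.2)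
  refine ⟨β⁻¹ • g, lt_costSplittingValue hT₁ hT₂ hne₁ hne₂ fun x hx y hy => ?_⟩
  have hval : (c - β⁻¹ • g) ⬝ᵥ x + (β⁻¹ • g) ⬝ᵥ y - z
      = β⁻¹ * (g ⬝ᵥ (y - x) + β * (c ⬝ᵥ x - z)) := by
    simp only [sub_dotProduct, dotProduct_sub, smul_dotProduct, smul_eq_mul]
    field_simp
    ring
  have := mul_pos (inv_pos.2 hβ) (hsep' (x, y) ⟨hx, hy⟩)
  linarith

theorem isLeast_dotProduct_convexHull_inter (hT₁ : T₁.Finite) (hT₂ : T₂.Finite)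
    (hne₁ : T₁.Nonempty) (hne₂ : T₂.Nonempty) {z : ℝ}
    (hz : IsLUB (range (costSplittingValue c T₁ T₂)) z) :
    IsLeast ((c ⬝ᵥ ·) '' (convexHull ℝ T₁ ∩ convexHull ℝ T₂)) z := by
  have hweak : z ∈ lowerBounds ((c ⬝ᵥ ·) '' (convexHull ℝ T₁ ∩ convexHull ℝ T₂)) := by
    rintro _ ⟨x, ⟨hx₁, hx₂⟩, rfl⟩
    exact hz.2 (forall_mem_range.2 fun u => costSplittingValue_le hT₁ hT₂ u hx₁ hx₂)
  have hgap : ∃ x ∈ convexHull ℝ T₁ ∩ convexHull ℝ T₂, c ⬝ᵥ x ≤ z := by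
    by_contra! h
    obtain ⟨u, hu⟩ := exists_lt_costSplittingValue hT₁ hT₂ hne₁ hne₂ h
    exact hu.not_ge (hz.1 (mem_range_self u))
  obtain ⟨x, hx, hxz⟩ := hgap
  exact ⟨⟨x, hx, le_antisymm hxz (hweak ⟨x, hx, rfl⟩)⟩, hweak⟩

end CostSplitting

theorem cost_splitting_characterization_general (nn : ℕ)
    (c : Fin nn → ℝ)
    (S1 : Set (Fin nn → ℕ)) (S2 : Set (Fin nn → ℕ))
    (hS1ne : S1.Nonempty) (hS2ne : S2.Nonempty)
    (hS1fin : S1.Finite) (hS2fin : S2.Finite)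
    (zCS : ℝ)
    (hCS : IsLUB {v | ∃ u : Fin nn → ℝ,
      v = sInf {w | ∃ x1 ∈ S1, w = ∑ j, (c j - u j) * (x1 j : ℝ)} +
          sInf {w | ∃ x2 ∈ S2, w = ∑ j, u j * (x2 j : ℝ)}} zCS) :
    IsLeast {v | ∃ x ∈ convexHull ℝ ((fun (x : Fin nn → ℕ) (j : Fin nn) => (x j : ℝ)) '' S1) ∩
        convexHull ℝ ((fun (x : Fin nn → ℕ) (j : Fin nn) => (x j : ℝ)) '' S2),
      v = ∑ j, c j * x j} zCS := by
  set castVec : (Fin nn → ℕ) → Fin nn → ℝ := fun x j => (x j : ℝ)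
  have hdual : {v | ∃ u : Fin nn → ℝ,
      v = sInf {w | ∃ x1 ∈ S1, w = ∑ j, (c j - u j) * (x1 j : ℝ)} +
          sInf {w | ∃ x2 ∈ S2, w = ∑ j, u j * (x2 j : ℝ)}} =
      range (costSplittingValue c (castVec '' S1) (castVec '' S2)) := by
    ext v
    simp only [mem_ofPred_eq, mem_range, costSplittingValue, image_image, eq_comm (a := v)]
    refine exists_congr fun u => ?_
    congr! 3 <;> ext w <;> simp [dotProduct, castVec, eq_comm]
  have := isLeast_dotProduct_convexHull_inter (hS1fin.image castVec) (hS2fin.image castVec)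
    (hS1ne.image castVec) (hS2ne.image castVec) (hdual ▸ hCS)
  convert this using 1
  ext v
  simp [dotProduct, eq_comm]

/-- Polyhedral characterization of the cost-splitting dual:
`z_CS = max_u [min{(c-u)x¹ : x¹ ∈ S¹} + min{u x² : x² ∈ S²}]` equals
`min{cx : x ∈ conv S¹ ∩ conv S²}`, where `Sⁱ = {x ∈ ℤ₊ⁿ : Aⁱx ≤ bⁱ}` are the two integer
feasible sets (assumed nonempty and finite). -/
theorem cost_splitting_characterization (nn m1 m2 : ℕ)
    (c : Fin nn → ℝ) (A1 : Matrix (Fin m1) (Fin nn) ℝ) (b1 : Fin m1 → ℝ)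
    (A2 : Matrix (Fin m2) (Fin nn) ℝ) (b2 : Fin m2 → ℝ)
    (S1 : Set (Fin nn → ℕ)) (S2 : Set (Fin nn → ℕ))
    (hS1 : S1 = {x | ∀ i, ∑ j, A1 i j * (x j : ℝ) ≤ b1 i})
    (hS2 : S2 = {x | ∀ i, ∑ j, A2 i j * (x j : ℝ) ≤ b2 i})
    (hS1ne : S1.Nonempty) (hS2ne : S2.Nonempty)
    (hS1fin : S1.Finite) (hS2fin : S2.Finite)
    (zCS : ℝ)
    (hCS : IsLUB {v | ∃ u : Fin nn → ℝ,
      v = sInf {w | ∃ x1 ∈ S1, w = ∑ j, (c j - u j) * (x1 j : ℝ)} +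
          sInf {w | ∃ x2 ∈ S2, w = ∑ j, u j * (x2 j : ℝ)}} zCS) :
    IsLeast {v | ∃ x ∈ convexHull ℝ ((fun (x : Fin nn → ℕ) (j : Fin nn) => (x j : ℝ)) '' S1) ∩
        convexHull ℝ ((fun (x : Fin nn → ℕ) (j : Fin nn) => (x j : ℝ)) '' S2),
      v = ∑ j, c j * x j} zCS :=
  cost_splitting_characterization_general nn c S1 S2 hS1ne hS2ne hS1fin hS2fin zCS hCS
end
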